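/- arXiv:0910.4743 — 6 statements merged into one kernel-verified Lean document; each statement's English description precedes it below -/
import Mathlib

section
/- Every complex anti-symmetric n×n matrix A is congruent via an invertible upper-triangular matrix to a monomial anti-symmetric matrix whose nonzero entries are ±1, with the entries +1 above the main diagonal and -1 below it; i.e., there exists an invertible upper-triangular B and such a monomial matrix M with BᵀAB = M. -/
/-!
Process the indices one at a time, keeping the invariant that every processed row has at most
one nonzero entry, equal to `1` right of the diagonal and `-1` left of it, and vanishes on the
unprocessed columns (`IsReducedOutside A s`, with `s` the unprocessed indices). Let `i₀` be the
smallest unprocessed index. If its row is zero, it is done. Otherwise let `k` be the first column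
with `A i₀ k ≠ 0`; a congruence by a matrix whose `j`-th column is `e_j` corrected by multiples
of `e_{i₀}` and `e_k` turns rows `i₀` and `k` into `e_k` and `-e_{i₀}` and leaves the processed
rows alone. Minimality of `i₀` and `k` is exactly what makes this matrix upper triangular.
-/

open Matrix Finset

namespace AntisymmBorel

section Skew

variable {n R : Type*} [CommRing R] {A : Matrix n n R}

lemma apply_eq_neg_of_transpose_eq_neg (hA : Aᵀ = -A) (i j : n) : A j i = -A i j :=
  congrFun (congrFun hA i) j

lemma diag_eq_zero_of_transpose_eq_neg [NoZeroDivisors R] [NeZero (2 : R)] (hA : Aᵀ = -A)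
    (i : n) : A i i = 0 := by
  have h2 : (2 : R) * A i i = 0 := by
    linear_combination apply_eq_neg_of_transpose_eq_neg hA i i
  exact (mul_eq_zero.mp h2).resolve_left two_ne_zero

variable [Fintype n]

lemma transpose_mul_mul_eq_neg (hA : Aᵀ = -A) (P : Matrix n n R) :
    (Pᵀ * A * P)ᵀ = -(Pᵀ * A * P) := by
  simp [transpose_mul, hA, Matrix.mul_assoc]

end Skew

variable {ι K : Type*} [LinearOrder ι] [Field K]

lemma isUnit_of_isUpperTriangular [Fintype ι] {M : Matrix ι ι K} (h : M.IsUpperTriangular)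
    (hd : ∀ i, M i i ≠ 0) : IsUnit M := by
  rw [isUnit_iff_isUnit_det, det_of_isUpperTriangular h, isUnit_iff_ne_zero]
  exact prod_ne_zero_iff.mpr fun i _ => hd i

section NormalRow

def IsNormalRow (r : ι → K) (i : ι) : Prop :=
  ∃ k, (∀ j, j ≠ k → r j = 0) ∧ (r k = 0 ∨ (i < k ∧ r k = 1) ∨ (k < i ∧ r k = -1))

variable {r : ι → K} {i : ι}

lemma isNormalRow_zero (i : ι) : IsNormalRow (0 : ι → K) i :=
  ⟨i, fun _ _ => rfl, Or.inl rfl⟩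

lemma IsNormalRow.eq_of_ne_zero (h : IsNormalRow r i) {j l : ι} (hj : r j ≠ 0) (hl : r l ≠ 0) :
    j = l := by
  obtain ⟨k, hk, -⟩ := h
  exact (not_not.mp (mt (hk j) hj)).trans (not_not.mp (mt (hk l) hl)).symm

lemma IsNormalRow.apply (h : IsNormalRow r i) (j : ι) :
    r j = 0 ∨ (i < j ∧ r j = 1) ∨ (j < i ∧ r j = -1) := by
  obtain ⟨k, hk, hsign⟩ := h
  obtain rfl | hjk := eq_or_ne j k
  · exact hsign
  · exact Or.inl (hk j hjk)

end NormalRow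

section Pivot

variable (A : Matrix ι ι K) (i₀ k : ι)

/-- The correction terms make `e_{i₀} ⬝ᵥ A *ᵥ b_j` and `e_k ⬝ᵥ A *ᵥ b_j` vanish for
`b_j = pivotColumn A i₀ k j` with `j ≠ i₀, k`. -/
def pivotColumn (j : ι) : ι → K :=
  if j = i₀ then Pi.single i₀ 1
  else if j = k then (A i₀ k)⁻¹ • Pi.single k 1
  else Pi.single j 1 + (A k j / A i₀ k) • Pi.single i₀ 1 - (A i₀ j / A i₀ k) • Pi.single k 1

def pivotMatrix : Matrix ι ι K := of fun q j => pivotColumn A i₀ k j q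

variable {A i₀ k}

lemma pivotColumn_self : pivotColumn A i₀ k i₀ = Pi.single i₀ 1 := if_pos rfl

lemma pivotColumn_partner (h : i₀ ≠ k) :
    pivotColumn A i₀ k k = (A i₀ k)⁻¹ • Pi.single k 1 := by
  rw [pivotColumn, if_neg h.symm, if_pos rfl]

lemma pivotColumn_of_ne {j : ι} (hj₀ : j ≠ i₀) (hjk : j ≠ k) :
    pivotColumn A i₀ k j =
      Pi.single j 1 + (A k j / A i₀ k) • Pi.single i₀ 1 - (A i₀ j / A i₀ k) • Pi.single k 1 := by
  rw [pivotColumn, if_neg hj₀, if_neg hjk]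

lemma pivotMatrix_isUpperTriangular (h : i₀ < k) (hk : ∀ j < i₀, A k j = 0)
    (hi₀ : ∀ j < k, A i₀ j = 0) : (pivotMatrix A i₀ k).IsUpperTriangular := by
  intro q j (hjq : j < q)
  simp only [pivotMatrix, of_apply]
  obtain rfl | hj₀ := eq_or_ne j i₀
  · simp [pivotColumn_self, hjq.ne']
  obtain rfl | hjk := eq_or_ne j k
  · simp [pivotColumn_partner h.ne, hjq.ne']
  rw [pivotColumn_of_ne hj₀ hjk]
  obtain rfl | hq₀ := eq_or_ne q i₀
  · simp [hk j hjq, hjq.ne', h.ne]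
  obtain rfl | hqk := eq_or_ne q k
  · simp [hi₀ j hjq, hjq.ne', hq₀]
  · simp [hjq.ne', hq₀, hqk]

lemma pivotMatrix_apply_self_ne_zero (h : i₀ ≠ k) (ha : A i₀ k ≠ 0) (j : ι) :
    pivotMatrix A i₀ k j j ≠ 0 := by
  simp only [pivotMatrix, of_apply]
  obtain rfl | hj₀ := eq_or_ne j i₀
  · simp [pivotColumn_self]
  obtain rfl | hjk := eq_or_ne j k
  · simp [pivotColumn_partner h, ha]
  · simp [pivotColumn_of_ne hj₀ hjk, hj₀, hjk]

variable [Fintype ι]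

lemma pivotMatrix_conj_apply (i j : ι) :
    ((pivotMatrix A i₀ k)ᵀ * A * pivotMatrix A i₀ k) i j =
      pivotColumn A i₀ k i ⬝ᵥ A *ᵥ pivotColumn A i₀ k j := by
  rw [mul_apply', dotProduct_mulVec]
  rfl

lemma pivotMatrix_conj_apply_pivot (ha : A i₀ k ≠ 0) (h : i₀ ≠ k) (h₀ : A i₀ i₀ = 0)
    (j : ι) :
    ((pivotMatrix A i₀ k)ᵀ * A * pivotMatrix A i₀ k) i₀ j = if j = k then 1 else 0 := by
  rw [pivotMatrix_conj_apply, pivotColumn_self]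
  obtain rfl | hj₀ := eq_or_ne j i₀
  · simp [pivotColumn_self, h₀, h]
  obtain rfl | hjk := eq_or_ne j k
  · simp [pivotColumn_partner h, ha, mulVec_smul]
  · simp [pivotColumn_of_ne hj₀ hjk, hjk, h₀, mulVec_add, mulVec_sub, mulVec_smul]
    field_simp
    ring

lemma pivotMatrix_conj_apply_partner (hA : Aᵀ = -A) (ha : A i₀ k ≠ 0) (h : i₀ ≠ k)
    (hk : A k k = 0) (j : ι) :
    ((pivotMatrix A i₀ k)ᵀ * A * pivotMatrix A i₀ k) k j = if j = i₀ then -1 else 0 := by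
  have hk₀ := apply_eq_neg_of_transpose_eq_neg hA i₀ k
  rw [pivotMatrix_conj_apply, pivotColumn_partner h]
  obtain rfl | hj₀ := eq_or_ne j i₀
  · simp [pivotColumn_self, hk₀, ha]
  obtain rfl | hjk := eq_or_ne j k
  · simp [pivotColumn_partner h, hk, mulVec_smul, hj₀]
  · simp [pivotColumn_of_ne hj₀ hjk, hj₀, hk, hk₀, mulVec_add, mulVec_sub, mulVec_smul]
    field_simp
    ring

lemma pivotMatrix_conj_apply_of_ne (hA : Aᵀ = -A) (h : i₀ ≠ k) {i : ι} (hi₀ : i ≠ i₀)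
    (hik : i ≠ k) (hAii₀ : A i i₀ = 0) (hAik : A i k = 0) (j : ι) :
    ((pivotMatrix A i₀ k)ᵀ * A * pivotMatrix A i₀ k) i j = A i j := by
  have hcol : pivotColumn A i₀ k i = Pi.single i 1 := by
    simp [pivotColumn_of_ne hi₀ hik, apply_eq_neg_of_transpose_eq_neg hA i, hAii₀, hAik]
  rw [pivotMatrix_conj_apply, hcol]
  obtain rfl | hj₀ := eq_or_ne j i₀
  · simp [pivotColumn_self]
  obtain rfl | hjk := eq_or_ne j k
  · simp [pivotColumn_partner h, mulVec_smul, hAik]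
  · simp [pivotColumn_of_ne hj₀ hjk, hAii₀, hAik, mulVec_add, mulVec_sub, mulVec_smul]

end Pivot

section Reduction

def IsReducedOutside (A : Matrix ι ι K) (s : Finset ι) : Prop :=
  ∀ i ∉ s, IsNormalRow (A i) i ∧ ∀ j ∈ s, A i j = 0

variable {A : Matrix ι ι K} {s : Finset ι}

lemma IsReducedOutside.apply_eq_zero (hA : Aᵀ = -A) (hred : IsReducedOutside A s) {i j : ι}
    (hi : i ∈ s) (hj : j ∉ s) : A i j = 0 := by
  rw [apply_eq_neg_of_transpose_eq_neg hA j i, (hred j hj).2 i hi, neg_zero]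

lemma IsReducedOutside.erase_of_row_eq_zero (hred : IsReducedOutside A s) {i₀ : ι}
    (hrow : ∀ j, A i₀ j = 0) : IsReducedOutside A (s.erase i₀) := by
  intro i hi
  obtain rfl | hne := eq_or_ne i i₀
  · exact ⟨(funext hrow : A i = 0) ▸ isNormalRow_zero i, fun j _ => hrow j⟩
  · have his : i ∉ s := fun h => hi (mem_erase.mpr ⟨hne, h⟩)
    exact ⟨(hred i his).1, fun j hj => (hred i his).2 j (mem_of_mem_erase hj)⟩

variable [Fintype ι]

lemma IsReducedOutside.exists_pivot_reduction [NeZero (2 : K)] (hA : Aᵀ = -A)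
    (hred : IsReducedOutside A s) (hs : s.Nonempty) (hrow : ∃ j, A (s.min' hs) j ≠ 0) :
    ∃ t ⊂ s, ∃ B : Matrix ι ι K, IsUnit B ∧ B.IsUpperTriangular ∧
      IsReducedOutside (Bᵀ * A * B) t := by
  set i₀ := s.min' hs
  have hi₀ : i₀ ∈ s := min'_mem s hs
  obtain ⟨k, hk : A i₀ k ≠ 0, hmin⟩ := wellFounded_lt.has_min {j | A i₀ j ≠ 0} hrow
  have hbefore_k : ∀ j < k, A i₀ j = 0 := fun j hj => not_not.mp fun h => hmin j h hj
  have hks : k ∈ s := by_contra fun hks => hk (hred.apply_eq_zero hA hi₀ hks)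
  have hlt : i₀ < k := (min'_le s k hks).lt_of_ne fun h =>
    hk (by rw [← h]; exact diag_eq_zero_of_transpose_eq_neg hA i₀)
  have hbefore_i₀ : ∀ j < i₀, A k j = 0 := fun j hj =>
    hred.apply_eq_zero hA hks fun hjs => (min'_le s j hjs).not_gt hj
  have htri := pivotMatrix_isUpperTriangular hlt hbefore_i₀ hbefore_k
  refine ⟨(s.erase i₀).erase k, (erase_subset k _).trans_ssubset (erase_ssubset hi₀),
    pivotMatrix A i₀ k, isUnit_of_isUpperTriangular htri
      (pivotMatrix_apply_self_ne_zero hlt.ne hk), htri, fun i hi => ?_⟩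
  obtain rfl | hi₀' := eq_or_ne i i₀
  · have hrow :=
      pivotMatrix_conj_apply_pivot hk hlt.ne (diag_eq_zero_of_transpose_eq_neg hA i₀)
    refine ⟨⟨k, fun j hj => by simp [hrow, hj], Or.inr (Or.inl ⟨hlt, by simp [hrow]⟩)⟩,
      fun j hj => ?_⟩
    rw [hrow, if_neg (ne_of_mem_erase hj)]
  obtain rfl | hik := eq_or_ne k i
  · have hrow :=
      pivotMatrix_conj_apply_partner hA hk hlt.ne (diag_eq_zero_of_transpose_eq_neg hA k)
    refine ⟨⟨i₀, fun j hj => by simp [hrow, hj], Or.inr (Or.inr ⟨hlt, by simp [hrow]⟩)⟩,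
      fun j hj => ?_⟩
    rw [hrow, if_neg (ne_of_mem_erase (mem_of_mem_erase hj))]
  · have his : i ∉ s := by simpa [hi₀', hik.symm] using hi
    have hrow : ((pivotMatrix A i₀ k)ᵀ * A * pivotMatrix A i₀ k) i = A i :=
      funext <| pivotMatrix_conj_apply_of_ne hA hlt.ne hi₀' hik.symm ((hred i his).2 i₀ hi₀)
        ((hred i his).2 k hks)
    rw [hrow]
    exact ⟨(hred i his).1,
      fun j hj => (hred i his).2 j (mem_of_mem_erase (mem_of_mem_erase hj))⟩

lemma IsReducedOutside.exists_reduction_step [NeZero (2 : K)] (hA : Aᵀ = -A)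
    (hred : IsReducedOutside A s) (hs : s.Nonempty) :
    ∃ t ⊂ s, ∃ B : Matrix ι ι K, IsUnit B ∧ B.IsUpperTriangular ∧
      IsReducedOutside (Bᵀ * A * B) t := by
  by_cases hrow : ∀ j, A (s.min' hs) j = 0
  · exact ⟨s.erase _, erase_ssubset (min'_mem s hs), 1, isUnit_one, blockTriangular_one,
      by simpa using hred.erase_of_row_eq_zero hrow⟩
  · exact hred.exists_pivot_reduction hA hs (not_forall.mp hrow)

theorem IsReducedOutside.exists_isUpperTriangular_isNormalRow [NeZero (2 : K)]
    (hA : Aᵀ = -A) (hred : IsReducedOutside A s) :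
    ∃ B : Matrix ι ι K, IsUnit B ∧ B.IsUpperTriangular ∧
      ∀ i, IsNormalRow ((Bᵀ * A * B) i) i := by
  induction s using Finset.strongInduction generalizing A with
  | H s ih =>
  obtain rfl | hs := s.eq_empty_or_nonempty
  · exact ⟨1, isUnit_one, blockTriangular_one,
      fun i => by simpa using (hred i (notMem_empty i)).1⟩
  obtain ⟨t, hts, B₁, hB₁, hB₁t, hred₁⟩ := hred.exists_reduction_step hA hs
  obtain ⟨B₂, hB₂, hB₂t, hnormal⟩ := ih t hts (transpose_mul_mul_eq_neg hA B₁) hred₁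
  refine ⟨B₁ * B₂, hB₁.mul hB₂, hB₁t.mul hB₂t, ?_⟩
  simpa [transpose_mul, Matrix.mul_assoc] using hnormal

end Reduction

end AntisymmBorel

open AntisymmBorel

/-- Every complex anti-symmetric matrix is congruent via an invertible
upper-triangular matrix to a monomial anti-symmetric matrix whose nonzero
entries are `+1` above the diagonal and `-1` below it. -/
theorem stmt0 (n : ℕ) (A : Matrix (Fin n) (Fin n) ℂ) (hA : Aᵀ = -A) :
    ∃ B M : Matrix (Fin n) (Fin n) ℂ,
      IsUnit B ∧ (∀ i j : Fin n, j < i → B i j = 0) ∧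
      Bᵀ * A * B = M ∧
      Mᵀ = -M ∧
      (∀ i j k : Fin n, M i j ≠ 0 → M i k ≠ 0 → j = k) ∧
      (∀ i j k : Fin n, M j i ≠ 0 → M k i ≠ 0 → j = k) ∧
      (∀ i j : Fin n, M i j = 0 ∨ (i < j ∧ M i j = 1) ∨ (j < i ∧ M i j = -1)) := by
  have hred : IsReducedOutside A univ := fun i hi => absurd (mem_univ i) hi
  obtain ⟨B, hB, hBt, hnormal⟩ := hred.exists_isUpperTriangular_isNormalRow hA
  have hM := transpose_mul_mul_eq_neg hA B
  refine ⟨B, _, hB, fun i j hji => hBt hji, rfl, hM, fun i j k => (hnormal i).eq_of_ne_zero,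
    fun i j k hj hk => ?_, fun i j => (hnormal i).apply j⟩
  rw [apply_eq_neg_of_transpose_eq_neg hM] at hj hk
  exact (hnormal i).eq_of_ne_zero (neg_ne_zero.mp hj) (neg_ne_zero.mp hk)
end

section
/- Let X, Y be n×n matrices over a field with Y = L X B for some invertible lower-triangular matrix L and some invertible upper-triangular matrix B. Then for all 1 ≤ k, ℓ ≤ n, the upper-left k×ℓ submatrices of X and Y have equal rank. -/
/-!
Because `L` is lower triangular, the first `k` rows of `L * X` only involve the first `k` rows
of `X`, so the upper-left `k × ℓ` block of `L X B` is `L_{kk} X_{kℓ} B_{ℓℓ}`. The leading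
principal blocks `L_{kk}` and `B_{ℓℓ}` of invertible triangular matrices are again triangular
with the same, nonzero, diagonal entries, hence invertible, and multiplying by invertible
matrices does not change the rank.
-/

open Matrix

namespace Matrix

variable {R : Type*} {n k : ℕ}

theorem IsLowerTriangular.submatrix_castLE_mul [NonUnitalNonAssocSemiring R] {ι ι' : Type*}
    {L : Matrix (Fin n) (Fin n) R} (hL : L.IsLowerTriangular) (N : Matrix (Fin n) ι R)
    (hk : k ≤ n) (g : ι' → ι) :
    (L * N).submatrix (Fin.castLE hk) g =
      L.submatrix (Fin.castLE hk) (Fin.castLE hk) * N.submatrix (Fin.castLE hk) g := by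
  ext i j
  refine (Fintype.sum_of_injective _ (Fin.castLE_injective hk) _ _ ?_ fun _ => rfl).symm
  intro a ha
  have hia : Fin.castLE hk i < a := by
    simp only [Fin.range_castLE, Set.mem_ofPred_eq, not_lt] at ha
    exact Fin.lt_def.mpr (lt_of_lt_of_le i.isLt ha)
  exact mul_eq_zero_of_left (hL hia) _

theorem IsUpperTriangular.submatrix_mul_castLE [NonUnitalCommSemiring R] {ι ι' : Type*}
    {B : Matrix (Fin n) (Fin n) R} (hB : B.IsUpperTriangular) (N : Matrix ι (Fin n) R)
    (hk : k ≤ n) (g : ι' → ι) :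
    (N * B).submatrix g (Fin.castLE hk) =
      N.submatrix g (Fin.castLE hk) * B.submatrix (Fin.castLE hk) (Fin.castLE hk) := by
  apply transpose_injective
  simp only [transpose_submatrix, transpose_mul]
  exact IsLowerTriangular.submatrix_castLE_mul hB.transpose Nᵀ hk g

variable {m m' : Type*} [Fintype m] [LinearOrder m] [Fintype m'] [LinearOrder m']
  [DecidableEq m] [DecidableEq m'] [CommRing R]

theorem IsUpperTriangular.isUnit_det_submatrix {M : Matrix m m R} (hM : M.IsUpperTriangular)
    (hdet : IsUnit M.det) {f : m' → m} (hf : StrictMono f) :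
    IsUnit (M.submatrix f f).det := by
  have hMf : (M.submatrix f f).IsUpperTriangular := fun _ _ hij => hM (hf hij)
  rw [det_of_isUpperTriangular hM, IsUnit.prod_univ_iff] at hdet
  rw [det_of_isUpperTriangular hMf, IsUnit.prod_univ_iff]
  exact fun i => hdet (f i)

theorem IsLowerTriangular.isUnit_det_submatrix {M : Matrix m m R} (hM : M.IsLowerTriangular)
    (hdet : IsUnit M.det) {f : m' → m} (hf : StrictMono f) :
    IsUnit (M.submatrix f f).det := by
  rw [← det_transpose] at hdet ⊢
  exact IsUpperTriangular.isUnit_det_submatrix hM.transpose hdet hf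

end Matrix

theorem stmt4_general {F : Type*} [Field F] (n : ℕ) (X Y L B : Matrix (Fin n) (Fin n) F)
    (hLT : ∀ i j : Fin n, i < j → L i j = 0) (hL : IsUnit L)
    (hBT : ∀ i j : Fin n, j < i → B i j = 0) (hB : IsUnit B)
    (h : Y = L * X * B)
    (k l : ℕ) (hk : k ≤ n) (hl : l ≤ n) :
    (X.submatrix (Fin.castLE hk) (Fin.castLE hl)).rank =
      (Y.submatrix (Fin.castLE hk) (Fin.castLE hl)).rank := by
  have hLtri : L.IsLowerTriangular := fun i j hij => hLT i j hij
  have hBtri : B.IsUpperTriangular := fun i j hij => hBT i j hij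
  have hLk : IsUnit (L.submatrix (Fin.castLE hk) (Fin.castLE hk)).det :=
    hLtri.isUnit_det_submatrix (L.isUnit_iff_isUnit_det.mp hL) (Fin.strictMono_castLE hk)
  have hBl : IsUnit (B.submatrix (Fin.castLE hl) (Fin.castLE hl)).det :=
    hBtri.isUnit_det_submatrix (B.isUnit_iff_isUnit_det.mp hB) (Fin.strictMono_castLE hl)
  rw [h, hBtri.submatrix_mul_castLE, hLtri.submatrix_castLE_mul,
    rank_mul_eq_left_of_isUnit_det _ _ hBl, rank_mul_eq_right_of_isUnit_det _ _ hLk]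

/-- If `Y = L X B` with `L` invertible lower-triangular and `B` invertible
upper-triangular, then for all `1 ≤ k, ℓ ≤ n` the upper-left `k × ℓ`
submatrices of `X` and `Y` have equal rank. -/
theorem stmt4 {F : Type*} [Field F] (n : ℕ) (X Y L B : Matrix (Fin n) (Fin n) F)
    (hLT : ∀ i j : Fin n, i < j → L i j = 0) (hL : IsUnit L)
    (hBT : ∀ i j : Fin n, j < i → B i j = 0) (hB : IsUnit B)
    (h : Y = L * X * B)
    (k l : ℕ) (hk1 : 1 ≤ k) (hk : k ≤ n) (hl1 : 1 ≤ l) (hl : l ≤ n) :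
    (X.submatrix (Fin.castLE hk) (Fin.castLE hl)).rank =
      (Y.submatrix (Fin.castLE hk) (Fin.castLE hl)).rank :=
  stmt4_general n X Y L B hLT hL hBT hB h k l hk hl
end

section
/- If X is an anti-symmetric n×n complex matrix and B is an invertible upper-triangular matrix, then X and BᵀXB have the same rank-control matrix, i.e., rank((BᵀXB)_{kℓ}) = rank(X_{kℓ}) for all 1 ≤ k, ℓ ≤ n. -/
/-!
Because `B` is upper triangular, the upper-left `k × ℓ` block of `Bᵀ X B` is `B_kᵀ X_{kℓ} B_ℓ`,
where `B_k` is the leading principal `k × k` block of `B`. That block is again upper triangular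
with the same (unit) diagonal entries, so it is invertible and multiplying by it preserves rank.
-/

open Matrix

namespace Matrix

variable {R : Type*} {m : Type*} {n k : ℕ}

theorem IsUpperTriangular.submatrix_castLE [Zero R] {B : Matrix (Fin n) (Fin n) R}
    (hB : B.IsUpperTriangular) (h : k ≤ n) :
    (B.submatrix (Fin.castLE h) (Fin.castLE h)).IsUpperTriangular :=
  fun _ _ hij => hB ((Fin.castLE_lt_castLE_iff h).mpr hij)

theorem IsUpperTriangular.isUnit_det_submatrix_castLE [CommRing R]
    {B : Matrix (Fin n) (Fin n) R} (hB : B.IsUpperTriangular) (hdet : IsUnit B.det)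
    (h : k ≤ n) : IsUnit (B.submatrix (Fin.castLE h) (Fin.castLE h)).det := by
  rw [det_of_isUpperTriangular hB, IsUnit.prod_univ_iff] at hdet
  rw [det_of_isUpperTriangular (hB.submatrix_castLE h), IsUnit.prod_univ_iff]
  exact fun i => hdet _

theorem mul_submatrix_castLE_of_isUpperTriangular [NonUnitalNonAssocSemiring R]
    (M : Matrix m (Fin n) R) {B : Matrix (Fin n) (Fin n) R} (hB : B.IsUpperTriangular)
    {m₀ : Type*} (r : m₀ → m) (h : k ≤ n) :
    (M * B).submatrix r (Fin.castLE h) =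
      M.submatrix r (Fin.castLE h) * B.submatrix (Fin.castLE h) (Fin.castLE h) := by
  ext i j
  refine (Fintype.sum_of_injective (Fin.castLE h) (Fin.castLE_injective h) _ _
    (fun p hp => ?_) fun _ => rfl).symm
  have hjp : Fin.castLE h j < p := by
    by_contra! hpj
    exact hp ⟨⟨p, Fin.le_def.mp hpj |>.trans_lt j.isLt⟩, rfl⟩
  exact mul_eq_zero_of_right _ (hB hjp)

theorem transpose_mul_submatrix_castLE_of_isUpperTriangular [CommSemiring R]
    (M : Matrix (Fin n) m R) {B : Matrix (Fin n) (Fin n) R} (hB : B.IsUpperTriangular)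
    {m₀ : Type*} (c : m₀ → m) (h : k ≤ n) :
    (Bᵀ * M).submatrix (Fin.castLE h) c =
      (B.submatrix (Fin.castLE h) (Fin.castLE h))ᵀ * M.submatrix (Fin.castLE h) c := by
  apply transpose_injective
  rw [transpose_submatrix, transpose_mul, transpose_transpose,
    mul_submatrix_castLE_of_isUpperTriangular _ hB, transpose_mul, transpose_transpose,
    transpose_submatrix]

end Matrix

theorem stmt5_general (n : ℕ) (X B : Matrix (Fin n) (Fin n) ℂ)
    (hB : IsUnit B) (hBT : ∀ i j : Fin n, j < i → B i j = 0)
    (k l : ℕ) (hk : k ≤ n) (hl : l ≤ n) :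
    ((Bᵀ * X * B).submatrix (Fin.castLE hk) (Fin.castLE hl)).rank =
      (X.submatrix (Fin.castLE hk) (Fin.castLE hl)).rank := by
  have hBU : B.IsUpperTriangular := fun i j hij => hBT i j hij
  have hdet : IsUnit B.det := (isUnit_iff_isUnit_det B).mp hB
  rw [mul_submatrix_castLE_of_isUpperTriangular _ hBU,
    transpose_mul_submatrix_castLE_of_isUpperTriangular _ hBU,
    rank_mul_eq_left_of_isUnit_det _ _ (hBU.isUnit_det_submatrix_castLE hdet hl),
    rank_mul_eq_right_of_isUnit_det _ _ (by
      rw [det_transpose]; exact hBU.isUnit_det_submatrix_castLE hdet hk)]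

/-- An anti-symmetric complex matrix `X` and `Bᵀ X B`, for `B` invertible
upper-triangular, have the same rank-control matrix. -/
theorem stmt5 (n : ℕ) (X B : Matrix (Fin n) (Fin n) ℂ) (hX : Xᵀ = -X)
    (hB : IsUnit B) (hBT : ∀ i j : Fin n, j < i → B i j = 0)
    (k l : ℕ) (hk1 : 1 ≤ k) (hk : k ≤ n) (hl1 : 1 ≤ l) (hl : l ≤ n) :
    ((Bᵀ * X * B).submatrix (Fin.castLE hk) (Fin.castLE hl)).rank =
      (X.submatrix (Fin.castLE hk) (Fin.castLE hl)).rank :=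
  stmt5_general n X B hB hBT k l hk hl
end

section
/- Let π ∈ S_n be an involution and let π̂ be the associated monomial anti-symmetric ±1-matrix with rank-control matrix R = (r_{ij}), where we set r_{0,k} = 0 for 0 ≤ k < n. Define 𝔄(π) = #{(i,j) : 1 ≤ i < j ≤ n and r_{ij} = r_{i-1,j-1}}. Then 𝔄(π) = 𝔍(π) + Σ_{a : π(a)=a} (n − a), where 𝔍(π) is the number of inversions of the word i₁ j₁ i₂ j₂ ⋯ i_k j_k obtained by writing π = (i₁,j₁)(i₂,j₂)⋯(i_k,j_k) as disjoint transpositions with i_t < j_t for all t and i₁ < i₂ < ⋯ < i_k. -/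
open Matrix

/-- `M` is a monomial anti-symmetric matrix with nonzero entries `±1`,
the `+1`'s above the main diagonal and the `-1`'s below it. -/
def GoodMat {n : ℕ} (M : Matrix (Fin n) (Fin n) ℂ) : Prop :=
  Mᵀ = -M ∧
  (∀ i j k : Fin n, M i j ≠ 0 → M i k ≠ 0 → j = k) ∧
  (∀ i j k : Fin n, M j i ≠ 0 → M k i ≠ 0 → j = k) ∧
  (∀ i j : Fin n, M i j = 0 ∨ (i < j ∧ M i j = 1) ∨ (j < i ∧ M i j = -1))

/-- The monomial anti-symmetric `±1`-matrix associated to an involution. -/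
def invMat {n : ℕ} (π : Equiv.Perm (Fin n)) : Matrix (Fin n) (Fin n) ℂ :=
  fun i j => if i < j ∧ π i = j then 1 else if j < i ∧ π j = i then -1 else 0

/-- Rank-control function: rank of the upper-left `k × l` submatrix
(with natural-number indices, clipped at `n`; in particular `rc A 0 l = 0`). -/
noncomputable def rc {n : ℕ} (A : Matrix (Fin n) (Fin n) ℂ) (k l : ℕ) : ℕ :=
  (A.submatrix (fun x : Fin (min k n) => Fin.castLE (min_le_right k n) x)
    (fun y : Fin (min l n) => Fin.castLE (min_le_right l n) y)).rank

/-- The parameter `𝔄`: the number of equalities along the diagonals of the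
strict upper triangle of the rank-control matrix, with `r₀ₖ := 0`. -/
noncomputable def AA {n : ℕ} (A : Matrix (Fin n) (Fin n) ℂ) : ℕ :=
  (Finset.univ.filter (fun p : Fin n × Fin n =>
    (p.1 : ℕ) < (p.2 : ℕ) ∧
      rc A ((p.1 : ℕ) + 1) ((p.2 : ℕ) + 1) = rc A (p.1 : ℕ) (p.2 : ℕ))).card

/-- Number of inversions of a word. -/
def inversions (w : List ℕ) : ℕ :=
  ((Finset.range w.length ×ˢ Finset.range w.length).filter
    (fun p => p.1 < p.2 ∧ w.getD p.2 0 < w.getD p.1 0)).card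

/-- `l` is the canonic form of the involution `π`: the list of the disjoint
transpositions `(iₜ, jₜ)` of `π` with `iₜ < jₜ`, sorted by first entries. -/
def IsCanonic {n : ℕ} (π : Equiv.Perm (Fin n)) (l : List (Fin n × Fin n)) : Prop :=
  (∀ p ∈ l, p.1 < p.2 ∧ π p.1 = p.2) ∧
  (∀ a : Fin n, a < π a → (a, π a) ∈ l) ∧
  l.Pairwise (fun p q => p.1 < q.1)

/-- The word `i₁ j₁ i₂ j₂ ⋯ iₖ jₖ` (with 1-indexed letters) of a canonic form. -/
def wordOf {n : ℕ} (l : List (Fin n × Fin n)) : List ℕ :=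
  l.flatMap fun p => [(p.1 : ℕ) + 1, (p.2 : ℕ) + 1]

/-!
A submatrix of `π̂` has at most one nonzero entry in each row, so its rank is the number of its
nonzero entries `(π b, b)`. Passing from the upper-left `i × j` block to the `(i+1) × (j+1)` one
adds the entry in the new row if its column is `≤ j`, and the entry in the new column if its row
is `≤ i`; so `r_{i+1, j+1} = r_{i j}` iff neither happens.

Among the pairs `i < j` with this property, charge those containing a fixed point to their
smallest fixed entry `a`. The pairs `(a, j)` are all counted except when `π j < a < j`, and
exactly these are made up for by the pairs `(π j, a)`, so `a` is charged `n - 1 - a`. A pair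
`(b, c)` of non-fixed points is counted iff `b = i_u` and `c` is a letter of a later pair
`(i_v, j_v)` with `c < j_u`; these are exactly the inversions `(j_u, c)` of the word, because no
inversion starts at a letter `i_u`.
-/

theorem Matrix.rank_eq_ncard_of_row_support_subsingleton {m n K : Type*} [Fintype m] [Fintype n]
    [Field K] (M : Matrix m n K) (hM : ∀ i j k, M i j ≠ 0 → M i k ≠ 0 → j = k) :
    M.rank = {j | ∃ i, M i j ≠ 0}.ncard := by
  suffices Submodule.span K (Set.range M.row) = Pi.spanSubset K {j | ∃ i, M i j ≠ 0} by
    rw [rank_eq_finrank_span_row, this, Pi.dim_spanSubset]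
  apply le_antisymm
  · rw [Submodule.span_le]
    rintro - ⟨i, rfl⟩
    exact Pi.mem_spanSubset_iff.2 fun j hj => by simp_all
  · refine Submodule.span_le.2 ?_
    rintro - ⟨j, ⟨i, hij⟩, rfl⟩
    classical
    have hrow : M.row i = M i j • Pi.basisFun K n j := by
      ext k
      by_cases hk : k = j
      · simp [hk]
      · simpa [Pi.single_apply, hk] using fun h => hk (hM i k j h hij)
    rw [SetLike.mem_coe, ← inv_smul_smul₀ hij (Pi.basisFun K n j), ← hrow]
    exact Submodule.smul_mem _ _ (Submodule.subset_span ⟨i, rfl⟩)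

open Finset

section InvMat

variable {n : ℕ} {π : Equiv.Perm (Fin n)}

lemma invMat_ne_zero_iff (hπ : Function.Involutive π) {a b : Fin n} :
    invMat π a b ≠ 0 ↔ π a = b ∧ a ≠ b := by
  unfold invMat
  have : π b = a ↔ π a = b := ⟨fun h => h ▸ hπ b, fun h => h ▸ hπ a⟩
  rcases lt_trichotomy a b with h | rfl | h
  · simp [h, h.ne, h.not_gt]
  · simp
  · simp [h, h.ne', h.not_gt, this]

lemma rc_invMat (hπ : Function.Involutive π) (k l : ℕ) :
    rc (invMat π) k l = #{b | π b ≠ b ∧ (π b : ℕ) < k ∧ (b : ℕ) < l} := by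
  rw [rc, Matrix.rank_eq_ncard_of_row_support_subsingleton]
  · rw [← Set.ncard_image_of_injective _ (Fin.castLE_injective (min_le_right l n)),
      ← Set.ncard_coe_finset]
    congr 1
    ext b
    simp only [Matrix.submatrix_apply, invMat_ne_zero_iff hπ, Set.mem_image, Set.mem_ofPred_eq,
      coe_filter, mem_univ, true_and]
    constructor
    · rintro ⟨y, ⟨x, hxy, hne⟩, rfl⟩
      have hyx : π (Fin.castLE (min_le_right l n) y) = Fin.castLE (min_le_right k n) x := by
        rw [← hxy, hπ]
      rw [hyx]
      exact ⟨hne, x.2.trans_le (min_le_left k n), y.2.trans_le (min_le_left l n)⟩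
    · rintro ⟨hb, hk, hl⟩
      exact ⟨⟨b, lt_min hl b.2⟩, ⟨⟨π b, lt_min hk (π b).2⟩, by simp [hπ b], by simpa using hb⟩,
        rfl⟩
  · intro x y z hy hz
    rw [Matrix.submatrix_apply, invMat_ne_zero_iff hπ] at hy hz
    exact Fin.castLE_injective _ (hy.1.symm.trans hz.1)

lemma rc_invMat_succ_eq_iff (hπ : Function.Involutive π) (i j : Fin n) :
    rc (invMat π) (i + 1) (j + 1) = rc (invMat π) i j ↔
      (π i = i ∨ j < π i) ∧ (π j = j ∨ i < π j) := by
  rw [rc_invMat hπ, rc_invMat hπ]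
  set s : Finset (Fin n) := {b | π b ≠ b ∧ (π b : ℕ) < i ∧ (b : ℕ) < j}
  set t : Finset (Fin n) := {b | π b ≠ b ∧ (π b : ℕ) < i + 1 ∧ (b : ℕ) < j + 1}
  have hst : s ⊆ t := monotone_filter_right _ fun b => by omega
  calc #t = #s ↔ t ⊆ s := by
        rw [le_antisymm_iff, and_iff_left (card_le_card hst), eq_iff_card_le_of_subset hst]
        exact ⟨fun h => h ▸ subset_rfl, hst.antisymm⟩
    _ ↔ _ := by
        simp only [s, t, subset_iff, mem_filter, mem_univ, true_and]
        refine ⟨fun h => ⟨?_, ?_⟩, fun ⟨hi, hj⟩ b ⟨hb, hbi, hbj⟩ => ?_⟩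
        · by_contra! hi
          have := @h (π i)
          simp only [hπ i] at this
          omega
        · by_contra! hj
          have := @h j
          omega
        · have h₁ : π b = i → π i = b := fun h => h ▸ hπ b
          have h₂ : b = j → π j = π b := fun h => h ▸ rfl
          omega

lemma AA_invMat (hπ : Function.Involutive π) :
    AA (invMat π) = #{p : Fin n × Fin n |
      p.1 < p.2 ∧ (π p.1 = p.1 ∨ p.2 < π p.1) ∧ (π p.2 = p.2 ∨ p.1 < π p.2)} := by
  unfold AA
  congr 1
  exact filter_congr fun p _ => and_congr_right fun _ => rc_invMat_succ_eq_iff hπ p.1 p.2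

lemma card_pairs_with_fixed_point (hπ : Function.Involutive π) :
    #{p : Fin n × Fin n |
      (p.1 < p.2 ∧ (π p.1 = p.1 ∨ p.2 < π p.1) ∧ (π p.2 = p.2 ∨ p.1 < π p.2)) ∧
        (π p.1 = p.1 ∨ π p.2 = p.2)} = ∑ a with π a = a, (n - 1 - a) := by
  calc _ = #{p : Fin n × Fin n | π p.1 = p.1 ∧ p.1 < p.2} := by
        refine card_bij' (fun p _ => if π p.1 = p.1 then p else (p.2, π p.1))
          (fun q _ => if π q.2 < q.1 then (π q.2, q.1) else q) ?_ ?_ ?_ ?_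
        · rintro ⟨i, j⟩ hp
          simp only [mem_filter, mem_univ, true_and] at hp
          obtain ⟨⟨hij, hi, -⟩, hfix⟩ := hp
          split_ifs with hi'
          · simpa using ⟨hi', hij⟩
          · simpa using ⟨hfix.resolve_left hi', hi.resolve_left hi'⟩
        · rintro ⟨a, x⟩ hq
          simp only [mem_filter, mem_univ, true_and] at hq ⊢
          split_ifs with hx
          · rw [hπ x]
            exact ⟨⟨hx, Or.inr hq.2, Or.inl hq.1⟩, Or.inr hq.1⟩
          · refine ⟨⟨hq.2, Or.inl hq.1, Or.inr (lt_of_le_of_ne (not_lt.1 hx) fun h => ?_)⟩,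
              Or.inl hq.1⟩
            have : x = a := by rw [← hπ x, ← h, hq.1]
            exact hq.2.ne' this
        · rintro ⟨i, j⟩ hp
          simp only [mem_filter, mem_univ, true_and] at hp
          by_cases hi : π i = i
          · simp only [if_pos hi, if_neg (show ¬π j < i by omega)]
          · simp only [if_neg hi, hπ i, if_pos hp.1.1]
        · rintro ⟨a, x⟩ hq
          simp only [mem_filter, mem_univ, true_and] at hq
          by_cases hx : π x < a
          · simp only [if_pos hx, hπ x, if_neg (show x ≠ π x by omega)]
          · simp only [if_neg hx, if_pos hq.1]
    _ = ∑ a with π a = a, #{x | a < x} := by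
        rw [card_filter, Fintype.sum_prod_type, sum_filter]
        refine sum_congr rfl fun a _ => ?_
        rw [card_filter]
        split_ifs with ha <;> simp [ha]
    _ = _ := by simp [filter_lt_eq_Ioi, Fin.card_Ioi]

end InvMat

section Word

variable {n : ℕ} {l : List (Fin n × Fin n)}

/-- `(u, v, e)` encodes the inversion formed by the letter `j_u` and the `e`-th letter of the
later pair `v` of `l`. -/
def arcInversions (l : List (Fin n × Fin n)) : Finset (Fin l.length × Fin l.length × Fin 2) :=
  {q | q.1 < q.2.1 ∧ ![l[q.2.1].1, l[q.2.1].2] q.2.2 < l[q.1].2}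

lemma wordOf_length (l : List (Fin n × Fin n)) : (wordOf l).length = 2 * l.length := by
  simp [wordOf, mul_comm]

lemma wordOf_getD (l : List (Fin n × Fin n)) {u : ℕ} (hu : u < l.length) (e : Fin 2) :
    (wordOf l).getD (2 * u + e) 0 = ![l[u].1, l[u].2] e + 1 := by
  induction l generalizing u with
  | nil => simp at hu
  | cons p l ih =>
    rcases u with _ | u
    · fin_cases e <;> rfl
    · have := ih (u := u) (by simpa using hu)
      simp only [wordOf, List.flatMap_cons] at this ⊢
      rw [show 2 * (u + 1) + e = (2 * u + e) + 2 by omega]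
      simpa using this

lemma wordOf_getD_even_lt (hlt : ∀ p ∈ l, p.1 < p.2)
    (hsort : l.Pairwise fun p q => p.1 < q.1) {s t : ℕ} (hs_even : s % 2 = 0) (hst : s < t)
    (ht : t < 2 * l.length) :
    (wordOf l).getD s 0 < (wordOf l).getD t 0 := by
  obtain ⟨a, rfl⟩ : ∃ a, s = 2 * a + (0 : Fin 2) :=
    ⟨s / 2, by simp only [Fin.coe_ofNat_eq_mod]; omega⟩
  obtain ⟨b, f, rfl⟩ : ∃ (b : ℕ) (f : Fin 2), t = 2 * b + f :=
    ⟨t / 2, ⟨t % 2, by omega⟩, by show t = 2 * (t / 2) + t % 2; omega⟩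
  have hb : b < l.length := by omega
  rw [wordOf_getD l (by omega), wordOf_getD l hb, add_lt_add_iff_right]
  have hb12 : l[b].1 < l[b].2 := hlt _ (List.getElem_mem hb)
  obtain rfl | hab := eq_or_lt_of_le (show a ≤ b by omega)
  · obtain rfl | rfl : f = 0 ∨ f = 1 := by omega
    · simp at hst
    · simpa using hb12
  · have := List.pairwise_iff_getElem.1 hsort a b (by omega) hb hab
    obtain rfl | rfl : f = 0 ∨ f = 1 := by omega
    · simpa using this
    · simpa using this.trans hb12

lemma inversions_wordOf (hlt : ∀ p ∈ l, p.1 < p.2)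
    (hsort : l.Pairwise fun p q => p.1 < q.1) :
    inversions (wordOf l) = #(arcInversions l) := by
  have hodd {u : ℕ} (hu : u < l.length) : (wordOf l).getD (2 * u + 1) 0 = l[u].2 + 1 := by
    simpa using wordOf_getD l hu 1
  symm
  refine card_bij (fun q _ => (2 * q.1 + 1, 2 * q.2.1 + q.2.2)) ?_ ?_ ?_
  · rintro ⟨u, v, e⟩ hq
    simp only [arcInversions, mem_filter, mem_univ, true_and, Fin.getElem_fin] at hq
    simp only [mem_filter, mem_product, mem_range, wordOf_length, hodd u.2, wordOf_getD l v.2]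
    omega
  · rintro ⟨u, v, e⟩ - ⟨u', v', e'⟩ - h
    simp only [Prod.mk.injEq] at h
    simp only [Prod.mk.injEq, Fin.ext_iff]
    omega
  · rintro ⟨s, t⟩ hst
    simp only [mem_filter, mem_product, mem_range, wordOf_length] at hst
    obtain ⟨⟨hs_lt, ht_lt⟩, hst, hw⟩ := hst
    have hsodd : s % 2 = 1 := by
      by_contra h
      exact hw.not_gt (wordOf_getD_even_lt hlt hsort (by omega) hst ht_lt)
    refine ⟨(⟨s / 2, by omega⟩, ⟨t / 2, by omega⟩, ⟨t % 2, by omega⟩), ?_, ?_⟩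
    · have hs' := hodd (u := s / 2) (by omega)
      have ht' := wordOf_getD l (u := t / 2) (by omega) ⟨t % 2, by omega⟩
      rw [show 2 * (s / 2) + 1 = s by omega] at hs'
      rw [show 2 * (t / 2) + t % 2 = t by omega] at ht'
      simp only [arcInversions, mem_filter, mem_univ, true_and, Fin.mk_lt_mk, Fin.getElem_fin]
      omega
    · simp only [Prod.mk.injEq]
      omega

end Word

namespace IsCanonic

variable {n : ℕ} {π : Equiv.Perm (Fin n)} {l : List (Fin n × Fin n)} {v w : ℕ}

lemma fst_lt_snd (hl : IsCanonic π l) (hw : w < l.length) : l[w].1 < l[w].2 :=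
  (hl.1 _ (List.getElem_mem hw)).1

lemma apply_fst (hl : IsCanonic π l) (hw : w < l.length) : π l[w].1 = l[w].2 :=
  (hl.1 _ (List.getElem_mem hw)).2

lemma apply_snd (hπ : Function.Involutive π) (hl : IsCanonic π l) (hw : w < l.length) :
    π l[w].2 = l[w].1 := by
  rw [← hl.apply_fst hw, hπ]

lemma fst_lt_fst_iff (hl : IsCanonic π l) (hv : v < l.length) (hw : w < l.length) :
    l[v].1 < l[w].1 ↔ v < w :=
  (show StrictMono fun u : Fin l.length => l[u].1 from
    fun _ _ h => List.pairwise_iff_get.1 hl.2.2 _ _ h).lt_iff_lt (a := ⟨v, hv⟩) (b := ⟨w, hw⟩)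

lemma fst_inj (hl : IsCanonic π l) (hv : v < l.length) (hw : w < l.length) :
    l[v].1 = l[w].1 ↔ v = w := by
  refine ⟨fun h => ?_, fun h => by subst h; rfl⟩
  rcases lt_trichotomy v w with h' | h' | h'
  · exact absurd h ((hl.fst_lt_fst_iff hv hw).2 h').ne
  · exact h'
  · exact absurd h ((hl.fst_lt_fst_iff hw hv).2 h').ne'

lemma exists_getElem_eq (hl : IsCanonic π l) {a : Fin n} (ha : a < π a) :
    ∃ (w : ℕ) (hw : w < l.length), l[w] = (a, π a) :=
  List.getElem_of_mem (hl.2.1 a ha)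

end IsCanonic

lemma card_pairs_without_fixed_point {n : ℕ} {π : Equiv.Perm (Fin n)}
    (hπ : Function.Involutive π) {l : List (Fin n × Fin n)} (hl : IsCanonic π l) :
    #{p : Fin n × Fin n |
      (p.1 < p.2 ∧ (π p.1 = p.1 ∨ p.2 < π p.1) ∧ (π p.2 = p.2 ∨ p.1 < π p.2)) ∧
        ¬(π p.1 = p.1 ∨ π p.2 = p.2)} = #(arcInversions l) := by
  symm
  refine card_bij (fun q _ => (l[q.1].1, ![l[q.2.1].1, l[q.2.1].2] q.2.2)) ?_ ?_ ?_
  · rintro ⟨u, v, e⟩ hq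
    simp only [arcInversions, mem_filter, mem_univ, true_and, Fin.getElem_fin] at hq ⊢
    have := (hl.fst_lt_fst_iff u.2 v.2).2 hq.1
    have := hl.fst_lt_snd v.2
    have := hl.fst_lt_snd u.2
    obtain rfl | rfl : e = 0 ∨ e = 1 := by omega
    all_goals
      simp only [Matrix.cons_val_zero, Matrix.cons_val_one, Matrix.cons_val_fin_one,
        hl.apply_fst, hl.apply_snd hπ] at hq ⊢
      omega
  · rintro ⟨u, v, e⟩ - ⟨u', v', e'⟩ - h
    simp only [Prod.mk.injEq, Fin.getElem_fin] at h ⊢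
    obtain ⟨hu, hv⟩ := h
    refine ⟨Fin.ext ((hl.fst_inj u.2 u'.2).1 hu), ?_⟩
    have hπv := congrArg π hv
    have := hl.fst_lt_snd v.2
    have := hl.fst_lt_snd v'.2
    obtain rfl | rfl : e = 0 ∨ e = 1 := by omega
    all_goals
      obtain rfl | rfl : e' = 0 ∨ e' = 1 := by omega
    all_goals
      simp only [Matrix.cons_val_zero, Matrix.cons_val_one, Matrix.cons_val_fin_one,
        hl.apply_fst, hl.apply_snd hπ, and_true] at hv hπv ⊢
      first | omega | exact Fin.ext ((hl.fst_inj v.2 v'.2).1 (by assumption))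
  · rintro ⟨b, c⟩ hbc
    simp only [mem_filter, mem_univ, true_and, not_or] at hbc
    obtain ⟨⟨hbc, hb, hc⟩, hbb, hcc⟩ := hbc
    obtain ⟨u, hu, hlu⟩ := hl.exists_getElem_eq (show b < π b by omega)
    rcases lt_or_gt_of_ne hcc with hcc | hcc
    · obtain ⟨v, hv, hlv⟩ := hl.exists_getElem_eq (show π c < π (π c) by rwa [hπ c])
      rw [hπ c] at hlv
      have huv : u < v := by rw [← hl.fst_lt_fst_iff hu hv, hlu, hlv]; dsimp only; omega
      refine ⟨(⟨u, hu⟩, ⟨v, hv⟩, 1), ?_, by simp [hlu, hlv]⟩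
      simpa [arcInversions, huv, hlu, hlv] using hb.resolve_left hbb
    · obtain ⟨v, hv, hlv⟩ := hl.exists_getElem_eq hcc
      have huv : u < v := by rw [← hl.fst_lt_fst_iff hu hv, hlu, hlv]; dsimp only; omega
      refine ⟨(⟨u, hu⟩, ⟨v, hv⟩, 0), ?_, by simp [hlu, hlv]⟩
      simpa [arcInversions, huv, hlu, hlv] using hb.resolve_left hbb

/-- Letters are 1-indexed: `a : Fin n` is the letter `a + 1`, so `n − a` is `n - 1 - (a : ℕ)`. -/
theorem stmt8 (n : ℕ) (π : Equiv.Perm (Fin n)) (hπ : π * π = 1)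
    (l : List (Fin n × Fin n)) (hl : IsCanonic π l) :
    AA (invMat π) =
      inversions (wordOf l) +
        ∑ a ∈ Finset.univ.filter (fun a : Fin n => π a = a), (n - 1 - (a : ℕ)) := by
  have hinv : Function.Involutive π := fun a => DFunLike.congr_fun hπ a
  rw [AA_invMat hinv, ← card_filter_add_card_filter_not (fun p => π p.1 = p.1 ∨ π p.2 = p.2),
    filter_filter, filter_filter, card_pairs_with_fixed_point hinv,
    card_pairs_without_fixed_point hinv hl, inversions_wordOf (fun p hp => (hl.1 p hp).1) hl.2.2,
    add_comm]
end

section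
/- Let π ∈ S_{n+1} be an involution containing the transposition (i, n+1) in canonic form, with remaining transpositions (i₁,j₁),…,(i_k,j_k). Then 𝔍(π) = 𝔍(π_n) + #{t : i_t < i < j_t} + 2·#{t : i_t > i}, where π_n is the restriction fixing i and n+1 removed. -/
/-!
Split the canonic form at `(i, n+1)` as `l₁ ++ (i, n+1) :: l₂`: the pairs of `l₁` start below
`i`, those of `l₂` start above `i` and, `π` being injective, end below `n+1`. Deleting a letter
from a word removes exactly the inversions it forms with the other letters. Of the letters
before it, `i+1` is exceeded only by the second letters `jₜ > i` of `l₁`, and it is below every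
letter after it; `n+1` exceeds no letter before it and every letter after it, two per pair of
`l₂`.
-/

open Matrix

lemma countP_eq_sum_range (q : ℕ → Bool) (w : List ℕ) :
    w.countP q = ∑ b ∈ Finset.range w.length, if q (w.getD b 0) then 1 else 0 := by
  induction w with
  | nil => simp
  | cons x w ih =>
    rw [List.countP_cons, List.length_cons, Finset.sum_range_succ', ih]
    simp only [List.getD_cons_succ, List.getD_cons_zero]

lemma inversions_eq_sum_range (w : List ℕ) :
    inversions w = ∑ a ∈ Finset.range w.length, ∑ b ∈ Finset.range w.length,
      if a < b ∧ w.getD b 0 < w.getD a 0 then 1 else 0 := by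
  rw [inversions, Finset.card_filter, Finset.sum_product]

lemma inversions_cons (x : ℕ) (w : List ℕ) :
    inversions (x :: w) = w.countP (· < x) + inversions w := by
  simp only [inversions_eq_sum_range, List.length_cons, Finset.sum_range_succ' _ w.length,
    countP_eq_sum_range, List.getD_cons_succ, List.getD_cons_zero]
  simp [add_comm]

lemma inversions_append_cons (u v : List ℕ) (x : ℕ) :
    inversions (u ++ x :: v) = inversions (u ++ v) + u.countP (x < ·) + v.countP (· < x) := by
  induction u with
  | nil => simp [inversions_cons, add_comm]
  | cons y u ih =>
    simp only [List.cons_append, inversions_cons, ih, List.countP_append, List.countP_cons]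
    simp only [decide_eq_true_eq]
    omega

section WordOf

variable {n : ℕ}

@[simp]
lemma wordOf_cons (p : Fin n × Fin n) (l : List (Fin n × Fin n)) :
    wordOf (p :: l) = ((p.1 : ℕ) + 1) :: ((p.2 : ℕ) + 1) :: wordOf l := rfl

@[simp]
lemma wordOf_append (l₁ l₂ : List (Fin n × Fin n)) :
    wordOf (l₁ ++ l₂) = wordOf l₁ ++ wordOf l₂ :=
  List.flatMap_append

lemma countP_wordOf (q : ℕ → Bool) (l : List (Fin n × Fin n)) :
    (wordOf l).countP q =
      l.countP (fun p => q ((p.1 : ℕ) + 1)) + l.countP (fun p => q ((p.2 : ℕ) + 1)) := by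
  induction l with
  | nil => rfl
  | cons p l ih =>
    simp only [wordOf_cons, List.countP_cons, ih]
    omega

end WordOf

lemma inversions_wordOf_insert_last {n : ℕ} (i : Fin (n + 1))
    (l₁ l₂ : List (Fin (n + 1) × Fin (n + 1))) (h₁ : ∀ p ∈ l₁, p.1 < i)
    (h₂ : ∀ p ∈ l₂, i < p.1 ∧ p.1 < p.2 ∧ p.2 < Fin.last n) :
    inversions (wordOf (l₁ ++ (i, Fin.last n) :: l₂)) =
      inversions (wordOf (l₁ ++ l₂)) + l₁.countP (fun p => i < p.2) + 2 * l₂.length := by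
  have before_i :
      (wordOf l₁).countP (fun a => (i : ℕ) + 1 < a) = l₁.countP (fun p => i < p.2) := by
    rw [countP_wordOf, List.countP_eq_zero.mpr, zero_add]
    · simp only [add_lt_add_iff_right, Fin.val_fin_lt]
    · intro p hp
      simpa using (h₁ p hp).le
  have before_last : (wordOf l₁).countP (fun a => n + 1 < a) = 0 := by
    rw [countP_wordOf, List.countP_eq_zero.mpr, List.countP_eq_zero.mpr] <;>
      simp [Fin.is_le]
  have after_i : ((n + 1) :: wordOf l₂).countP (fun a => a < (i : ℕ) + 1) = 0 := by
    rw [List.countP_cons, countP_wordOf, List.countP_eq_zero.mpr, List.countP_eq_zero.mpr]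
    · simp [i.is_le]
    · intro p hp
      simpa using ((h₂ p hp).1.trans (h₂ p hp).2.1).le
    · intro p hp
      simpa using (h₂ p hp).1.le
  have after_last : (wordOf l₂).countP (fun a => a < n + 1) = 2 * l₂.length := by
    rw [countP_wordOf, List.countP_eq_length.mpr, List.countP_eq_length.mpr, two_mul]
    · intro p hp
      simpa [Fin.lt_def] using (h₂ p hp).2.2
    · intro p hp
      simpa [Fin.lt_def] using (h₂ p hp).2.1.trans (h₂ p hp).2.2
  simp only [wordOf_append, wordOf_cons, Fin.val_last]
  rw [inversions_append_cons, inversions_append_cons, before_i, before_last, after_i, after_last]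
  ring

lemma IsCanonic.snd_lt_last {n : ℕ} {π : Equiv.Perm (Fin (n + 1))}
    {l : List (Fin (n + 1) × Fin (n + 1))} (hl : IsCanonic π l) {i : Fin (n + 1)}
    (hmem : (i, Fin.last n) ∈ l) {p : Fin (n + 1) × Fin (n + 1)} (hp : p ∈ l) (hpi : p.1 ≠ i) :
    p.2 < Fin.last n := by
  refine (Fin.le_last _).lt_of_ne fun hlast => hpi (π.injective ?_)
  rw [(hl.1 p hp).2, (hl.1 _ hmem).2, hlast]

theorem stmt14_general (n : ℕ) (π : Equiv.Perm (Fin (n + 1)))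
    (l : List (Fin (n + 1) × Fin (n + 1))) (hl : IsCanonic π l)
    (i : Fin (n + 1)) (hmem : (i, Fin.last n) ∈ l) :
    inversions (wordOf l) =
      inversions (wordOf (l.erase (i, Fin.last n))) +
        ((l.erase (i, Fin.last n)).filter fun p => decide (p.1 < i ∧ i < p.2)).length +
        2 * ((l.erase (i, Fin.last n)).filter fun p => decide (i < p.1)).length := by
  obtain ⟨l₁, l₂, rfl⟩ := List.append_of_mem hmem
  obtain ⟨-, hsorted, hcross⟩ := List.pairwise_append.mp hl.2.2
  have h₁ : ∀ p ∈ l₁, p.1 < i := fun p hp => hcross p hp _ List.mem_cons_self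
  have hgt : ∀ p ∈ l₂, i < p.1 := (List.pairwise_cons.mp hsorted).1
  have h₂ : ∀ p ∈ l₂, i < p.1 ∧ p.1 < p.2 ∧ p.2 < Fin.last n := fun p hp =>
    have hp' : p ∈ l₁ ++ (i, Fin.last n) :: l₂ := by simp [hp]
    ⟨hgt p hp, (hl.1 p hp').1, hl.snd_lt_last hmem hp' (hgt p hp).ne'⟩
  have herase : (l₁ ++ (i, Fin.last n) :: l₂).erase (i, Fin.last n) = l₁ ++ l₂ := by
    rw [List.erase_append_right _ fun h => (h₁ _ h).false, List.erase_cons_head]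
  have hstraddle : ((l₁ ++ l₂).filter fun p => decide (p.1 < i ∧ i < p.2)).length =
      l₁.countP (fun p => i < p.2) := by
    rw [← List.countP_eq_length_filter, List.countP_append,
      (List.countP_eq_zero (l := l₂)).mpr fun p hp => by
        simpa using fun h => absurd h (hgt p hp).asymm, add_zero]
    exact List.countP_congr fun p hp => by simp [h₁ p hp]
  have hafter : ((l₁ ++ l₂).filter fun p => decide (i < p.1)).length = l₂.length := by
    rw [← List.countP_eq_length_filter, List.countP_append,
      List.countP_eq_zero.mpr fun p hp => by simpa using (h₁ p hp).le,
      List.countP_eq_length.mpr fun p hp => by simpa using hgt p hp, zero_add]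
  rw [herase, hstraddle, hafter]
  exact inversions_wordOf_insert_last i l₁ l₂ h₁ h₂

/-- If the canonic form `l` of the involution `π ∈ S_{n+1}` contains the
transposition `(i, n+1)`, and the remaining transpositions `(iₜ,jₜ)` form the
canonic form of the restriction `πₙ`, then
`𝔍(π) = 𝔍(πₙ) + #{t : iₜ < i < jₜ} + 2·#{t : iₜ > i}`. -/
theorem stmt14 (n : ℕ) (π : Equiv.Perm (Fin (n + 1))) (hπ : π * π = 1)
    (l : List (Fin (n + 1) × Fin (n + 1))) (hl : IsCanonic π l)
    (i : Fin (n + 1)) (hmem : (i, Fin.last n) ∈ l) :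
    inversions (wordOf l) =
      inversions (wordOf (l.erase (i, Fin.last n))) +
        ((l.erase (i, Fin.last n)).filter fun p => decide (p.1 < i ∧ i < p.2)).length +
        2 * ((l.erase (i, Fin.last n)).filter fun p => decide (i < p.1)).length :=
  stmt14_general n π l hl i hmem
end

section
/- Let A be an n×m matrix over a field with rank(A_{k−1,ℓ−1}) = rank(A_{k,ℓ}) = c, where A_{p,q} denotes the upper-left p×q submatrix. Then the entry a_{k,ℓ} is determined by the other entries of A_{k,ℓ}: specifically, every (c+1)×(c+1) minor of A_{k,ℓ} vanishes, and there exist rows i₁<…<i_c ≤ k−1 and columns j₁<…<j_c ≤ ℓ−1 such that the (c+1)×(c+1) minor on rows i₁,…,i_c,k and columns j₁,…,j_c,ℓ vanishes while the c×c minor on rows i₁,…,i_c and columns j₁,…,j_c is nonzero, giving a polynomial equation involving a_{k,ℓ} with nonzero coefficient. -/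
/-!
A nonsingular `(c+1)×(c+1)` submatrix of `A_{k,ℓ}` would have rank `c + 1 > rank A_{k,ℓ}`,
so all `(c+1)`-minors of `A_{k,ℓ}` vanish. Since `rank A_{k−1,ℓ−1} = c`, choosing `c`
independent columns of it and then `c` independent rows of those gives a nonzero `c`-minor;
bordering it by row `k` and column `ℓ` yields a `(c+1)`-minor of `A_{k,ℓ}`, which therefore
vanishes.
-/

open Matrix

theorem exists_strictMono_linearIndependent {K V ι : Type*} [Field K] [AddCommGroup V]
    [Module K V] [Fintype ι] [LinearOrder ι] (v : ι → V) {c : ℕ}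
    (hc : Module.finrank K (Submodule.span K (Set.range v)) = c) :
    ∃ f : Fin c → ι, StrictMono f ∧ LinearIndependent K (v ∘ f) := by
  classical
  obtain ⟨κ, a, ha, hspan, hli⟩ := exists_linearIndependent' K v
  have : Fintype κ := Fintype.ofInjective a ha
  have hcard : (Finset.univ.map ⟨a, ha⟩).card = c := by
    rw [Finset.card_map, Finset.card_univ, ← hc, ← hspan, finrank_span_eq_card hli]
  set f := (Finset.univ.map ⟨a, ha⟩).orderEmbOfFin hcard
  have hrange : Set.range f = Set.range a := by
    simp [f, Finset.range_orderEmbOfFin]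
  refine ⟨f, f.strictMono, (linearIndepOn_range_iff f.injective v).mp ?_⟩
  rw [hrange]
  exact (linearIndepOn_range_iff ha v).mpr hli

theorem Matrix.exists_strictMono_det_submatrix_ne_zero {K m n : Type*} [Field K]
    [Fintype m] [LinearOrder m] [Fintype n] [LinearOrder n] (M : Matrix m n K) :
    ∃ (r : Fin M.rank → m) (s : Fin M.rank → n), StrictMono r ∧ StrictMono s ∧
      (M.submatrix r s).det ≠ 0 := by
  obtain ⟨s, hs, hcols⟩ :=
    exists_strictMono_linearIndependent M.col M.rank_eq_finrank_span_cols.symm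
  have hrank : (M.submatrix id s).rank = M.rank := by
    rw [← rank_transpose, LinearIndependent.rank_matrix (M := (M.submatrix id s)ᵀ) hcols,
      Fintype.card_fin]
  obtain ⟨r, hr, hrows⟩ := exists_strictMono_linearIndependent (M.submatrix id s).row
    ((M.submatrix id s).rank_eq_finrank_span_row.symm.trans hrank)
  have hunit : IsUnit (M.submatrix r s) := linearIndependent_rows_iff_isUnit.mp hrows
  exact ⟨r, s, hr, hs, ((isUnit_iff_isUnit_det _).mp hunit).ne_zero⟩

theorem Matrix.det_submatrix_eq_zero_of_rank_lt {K m n ι : Type*} [Field K] [Fintype n]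
    [Fintype ι] [DecidableEq ι] (M : Matrix m n K) (r : ι → m) (s : ι → n)
    (h : M.rank < Fintype.card ι) : (M.submatrix r s).det = 0 := by
  by_contra hdet
  have := (rank_of_det_ne_zero hdet).symm.trans_le (M.rank_submatrix_le r s)
  omega

/-- If `rank A_{k−1,ℓ−1} = rank A_{k,ℓ} = c`, then every `(c+1)×(c+1)` minor of
`A_{k,ℓ}` vanishes, and there are rows `i₁<…<i_c ≤ k−1` and columns
`j₁<…<j_c ≤ ℓ−1` such that the `(c+1)×(c+1)` minor on rows `i₁,…,i_c,k` and
columns `j₁,…,j_c,ℓ` vanishes while the `c×c` minor on rows `i₁,…,i_c` and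
columns `j₁,…,j_c` is nonzero: a polynomial equation involving `a_{k,ℓ}` with
nonzero coefficient. -/
theorem stmt15 {F : Type*} [Field F] (n m : ℕ) (A : Matrix (Fin n) (Fin m) F)
    (k l c : ℕ) (hk1 : 1 ≤ k) (hk : k ≤ n) (hl1 : 1 ≤ l) (hl : l ≤ m)
    (h1 : (A.submatrix (Fin.castLE (show k - 1 ≤ n by omega))
      (Fin.castLE (show l - 1 ≤ m by omega))).rank = c)
    (h2 : (A.submatrix (Fin.castLE hk) (Fin.castLE hl)).rank = c) :
    (∀ (r : Fin (c + 1) → Fin n) (s : Fin (c + 1) → Fin m),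
        (∀ t, (r t : ℕ) < k) → (∀ t, (s t : ℕ) < l) → (A.submatrix r s).det = 0) ∧
    ∃ (ri : Fin c → Fin n) (cj : Fin c → Fin m),
      StrictMono ri ∧ StrictMono cj ∧
      (∀ t, (ri t : ℕ) < k - 1) ∧ (∀ t, (cj t : ℕ) < l - 1) ∧
      (A.submatrix (Fin.snoc ri ⟨k - 1, by omega⟩)
        (Fin.snoc cj ⟨l - 1, by omega⟩)).det = 0 ∧
      (A.submatrix ri cj).det ≠ 0 := by
  have hvanish : ∀ (r : Fin (c + 1) → Fin n) (s : Fin (c + 1) → Fin m),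
      (∀ t, (r t : ℕ) < k) → (∀ t, (s t : ℕ) < l) → (A.submatrix r s).det = 0 :=
    fun r s hr hs =>
      (A.submatrix (Fin.castLE hk) (Fin.castLE hl)).det_submatrix_eq_zero_of_rank_lt
        (fun t => ⟨r t, hr t⟩) (fun t => ⟨s t, hs t⟩) (by simp [h2])
  obtain ⟨r, s, hr, hs, hdet⟩ := (A.submatrix (Fin.castLE (show k - 1 ≤ n by omega))
    (Fin.castLE (show l - 1 ≤ m by omega))).exists_strictMono_det_submatrix_ne_zero
  subst h1
  refine ⟨hvanish, Fin.castLE _ ∘ r, Fin.castLE _ ∘ s, (Fin.strictMono_castLE _).comp hr,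
    (Fin.strictMono_castLE _).comp hs, fun t => (r t).isLt, fun t => (s t).isLt,
    hvanish _ _ (Fin.lastCases ?_ fun t => ?_) (Fin.lastCases ?_ fun t => ?_), hdet⟩
  all_goals
    simp only [Fin.snoc_last, Fin.snoc_castSucc, Function.comp_apply, Fin.val_castLE]
    omega
end
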